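/- arXiv:1912.07673 — 4 statements merged into one kernel-verified Lean document; each statement's English description precedes it below -/
import Mathlib

section
/- (Existence of a non-expansive pullback point; Corollary 3.3.) Let n ≥ 1, d, m ≥ 1, let p₁,…,pₙ ∈ ℝ^d and q₁,…,qₙ ∈ ℝ^m satisfy ‖pᵢ − pⱼ‖ ≤ ‖qᵢ − qⱼ‖ for all i, j ∈ {1,…,n}. Then for every x ∈ ℝ^m there exists a point y ∈ ℝ^d such that ‖y − pᵢ‖ ≤ ‖x − qᵢ‖ for every i ∈ {1,…,n}. -/
/-!
This is the one-point step of Kirszbraun's extension theorem. Minimise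
`maxExcess p c y = maxᵢ (‖y - pᵢ‖² - cᵢ)`, with `cᵢ = ‖x - qᵢ‖²`, over `y`; it is coercive, so it
has a minimiser `y₀`. If `y₀` were outside the convex hull of the active centres `pᵢ` (those attaining the
maximum), moving `y₀` towards them along a separating direction would decrease every active
term, contradicting minimality. Hence `y₀ = ∑ wᵢ pᵢ` for weights on the active indices, and the
identity `∑ᵢⱼ wᵢ wⱼ ‖vᵢ - vⱼ‖² = 2 ∑ᵢ wᵢ ‖vᵢ‖² - 2 ‖∑ᵢ wᵢ vᵢ‖²`, applied to `vᵢ = y₀ - pᵢ` and to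
`vᵢ = x - qᵢ`, gives `∑ wᵢ ‖y₀ - pᵢ‖² ≤ ∑ wᵢ ‖x - qᵢ‖²`: the minimal value is `≤ 0`.
-/

open Finset Filter Topology RealInnerProductSpace

variable {ι E F : Type*} [NormedAddCommGroup E] [NormedAddCommGroup F]

section MaxExcess

variable [Fintype ι] [Nonempty ι]

noncomputable def maxExcess (p : ι → E) (c : ι → ℝ) (y : E) : ℝ :=
  univ.sup' univ_nonempty fun i ↦ ‖y - p i‖ ^ 2 - c i

variable (p : ι → E) (c : ι → ℝ)

theorem le_maxExcess (y : E) (i : ι) : ‖y - p i‖ ^ 2 - c i ≤ maxExcess p c y :=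
  le_sup' (fun i ↦ ‖y - p i‖ ^ 2 - c i) (mem_univ i)

theorem continuous_maxExcess : Continuous (maxExcess p c) :=
  Continuous.finset_sup'_apply _ fun i _ ↦ by fun_prop

theorem exists_forall_maxExcess_le [ProperSpace E] :
    ∃ y, ∀ z, maxExcess p c y ≤ maxExcess p c z := by
  obtain ⟨i⟩ := ‹Nonempty ι›
  refine (continuous_maxExcess p c).exists_forall_le
    (tendsto_atTop_mono (le_maxExcess p c · i) ?_)
  refine tendsto_atTop_add_const_right _ _ ((tendsto_pow_atTop two_ne_zero).comp ?_)
  exact tendsto_atTop_mono (fun z ↦ norm_sub_norm_le z (p i))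
    (tendsto_atTop_add_const_right _ _ tendsto_norm_cocompact_atTop)

variable [InnerProductSpace ℝ E]

theorem exists_maxExcess_add_smul_lt {y v : E}
    (hv : ∀ i, ‖y - p i‖ ^ 2 - c i = maxExcess p c y → ⟪v, y - p i⟫ < 0) :
    ∃ t : ℝ, maxExcess p c (y + t • v) < maxExcess p c y := by
  suffices h : ∀ i, ∀ᶠ t in 𝓝[>] (0 : ℝ), ‖y + t • v - p i‖ ^ 2 - c i < maxExcess p c y by
    obtain ⟨t, ht⟩ := (eventually_all.2 h).exists
    exact ⟨t, (sup'_lt_iff _).2 fun i _ ↦ ht i⟩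
  intro i
  rcases (le_maxExcess p c y i).lt_or_eq with hlt | heq
  · have hcont : Continuous fun t : ℝ ↦ ‖y + t • v - p i‖ ^ 2 - c i := by fun_prop
    refine nhdsWithin_le_nhds ((hcont.tendsto 0).eventually (gt_mem_nhds ?_))
    simpa using hlt
  · have hexpand : ∀ t : ℝ, ‖y + t • v - p i‖ ^ 2 - c i =
        ‖y - p i‖ ^ 2 - c i + t * (2 * ⟪v, y - p i⟫ + t * ‖v‖ ^ 2) := by
      intro t
      rw [add_sub_right_comm, norm_add_sq_real, real_inner_smul_right, norm_smul, mul_pow,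
        Real.norm_eq_abs, sq_abs, real_inner_comm]
      ring
    have hslope : ∀ᶠ t in 𝓝 (0 : ℝ), 2 * ⟪v, y - p i⟫ + t * ‖v‖ ^ 2 < 0 := by
      have hcont : Continuous fun t : ℝ ↦ 2 * ⟪v, y - p i⟫ + t * ‖v‖ ^ 2 := by fun_prop
      refine (hcont.tendsto 0).eventually (gt_mem_nhds ?_)
      simpa using mul_neg_of_pos_of_neg two_pos (hv i heq)
    filter_upwards [nhdsWithin_le_nhds hslope, self_mem_nhdsWithin] with t hneg (hpos : 0 < t)
    rw [hexpand, heq]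
    linarith [mul_neg_of_pos_of_neg hpos hneg]

theorem mem_convexHull_of_forall_maxExcess_le [CompleteSpace E] {y : E}
    (hy : ∀ z, maxExcess p c y ≤ maxExcess p c z) :
    y ∈ convexHull ℝ (p '' {i | ‖y - p i‖ ^ 2 - c i = maxExcess p c y}) := by
  by_contra hy_notMem
  obtain ⟨f, u, hfy, hfp⟩ := geometric_hahn_banach_point_closed (convex_convexHull ℝ _)
    ((Set.toFinite _).isCompact_convexHull (𝕜 := ℝ)).isClosed hy_notMem
  obtain ⟨t, ht⟩ := exists_maxExcess_add_smul_lt p c (v := (InnerProductSpace.toDual ℝ E).symm f)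
    fun i hi ↦ by
      rw [InnerProductSpace.toDual_symm_apply, map_sub]
      linarith [hfp _ (subset_convexHull ℝ _ ⟨i, hi, rfl⟩)]
  exact (hy _).not_gt ht

end MaxExcess

variable [InnerProductSpace ℝ E] [InnerProductSpace ℝ F]

theorem sum_sum_mul_norm_sub_sq (s : Finset ι) (w : ι → ℝ) (v : ι → E)
    (hw : ∑ i ∈ s, w i = 1) :
    ∑ i ∈ s, ∑ j ∈ s, w i * w j * ‖v i - v j‖ ^ 2 =
      2 * ∑ i ∈ s, w i * ‖v i‖ ^ 2 - 2 * ‖∑ i ∈ s, w i • v i‖ ^ 2 := by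
  have hmean : ‖∑ i ∈ s, w i • v i‖ ^ 2 = ∑ i ∈ s, ∑ j ∈ s, w j * (w i * ⟪v i, v j⟫) := by
    rw [← real_inner_self_eq_norm_sq, sum_inner]
    simp only [inner_sum, real_inner_smul_left, real_inner_smul_right]
  have hexpand : ∀ i j, w i * w j * ‖v i - v j‖ ^ 2 =
      w j * (w i * ‖v i‖ ^ 2) + w i * (w j * ‖v j‖ ^ 2) - 2 * (w j * (w i * ⟪v i, v j⟫)) := by
    intro i j
    rw [norm_sub_sq_real]
    ring
  simp only [hexpand, sum_add_distrib, sum_sub_distrib, ← mul_sum, ← sum_mul, hw, hmean]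
  ring

theorem sum_mul_norm_sub_sq_le_of_norm_sub_le (s : Finset ι) {w : ι → ℝ}
    (hw₀ : ∀ i ∈ s, 0 ≤ w i) (hw₁ : ∑ i ∈ s, w i = 1) {p : ι → E} {q : ι → F}
    (hpq : ∀ i ∈ s, ∀ j ∈ s, ‖p i - p j‖ ≤ ‖q i - q j‖) {y : E}
    (hy : ∑ i ∈ s, w i • p i = y) (x : F) :
    ∑ i ∈ s, w i * ‖y - p i‖ ^ 2 ≤ ∑ i ∈ s, w i * ‖x - q i‖ ^ 2 := by
  have hbary : ∑ i ∈ s, w i • (y - p i) = 0 := by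
    simp only [smul_sub, sum_sub_distrib, ← sum_smul, hw₁, one_smul, hy, sub_self]
  have hspread : ∑ i ∈ s, ∑ j ∈ s, w i * w j * ‖(y - p i) - (y - p j)‖ ^ 2 ≤
      ∑ i ∈ s, ∑ j ∈ s, w i * w j * ‖(x - q i) - (x - q j)‖ ^ 2 := by
    gcongr with i hi j hj
    · exact mul_nonneg (hw₀ i hi) (hw₀ j hj)
    · rw [sub_sub_sub_cancel_left, sub_sub_sub_cancel_left]
      exact hpq j hj i hi
  rw [sum_sum_mul_norm_sub_sq s w _ hw₁, sum_sum_mul_norm_sub_sq s w _ hw₁, hbary,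
    norm_zero] at hspread
  nlinarith [sq_nonneg ‖∑ i ∈ s, w i • (x - q i)‖]

theorem exists_forall_norm_sub_le_of_norm_sub_le [ProperSpace E] [Fintype ι] (p : ι → E)
    (q : ι → F) (hpq : ∀ i j, ‖p i - p j‖ ≤ ‖q i - q j‖) (x : F) :
    ∃ y, ∀ i, ‖y - p i‖ ≤ ‖x - q i‖ := by
  cases isEmpty_or_nonempty ι
  · exact ⟨0, isEmptyElim⟩
  obtain ⟨y, hy⟩ := exists_forall_maxExcess_le p fun i ↦ ‖x - q i‖ ^ 2
  set M := maxExcess p (fun i ↦ ‖x - q i‖ ^ 2) y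
  suffices hM : M ≤ 0 by
    refine ⟨y, fun i ↦ (pow_le_pow_iff_left₀ (norm_nonneg _) (norm_nonneg _) two_ne_zero).1 ?_⟩
    linarith [le_maxExcess p (fun i ↦ ‖x - q i‖ ^ 2) y i]
  obtain ⟨κ, s, w, z, hw₀, hw₁, hz, hyz⟩ := (_root_.convexHull_eq _).subset
    (mem_convexHull_of_forall_maxExcess_le p _ hy)
  choose! j hj_active hjz using hz
  have hbary : ∑ i ∈ s, w i • p (j i) = y := by
    rw [← hyz, centerMass_eq_of_sum_1 _ _ hw₁]
    exact sum_congr rfl fun i hi ↦ by rw [hjz i hi]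
  have hcmp : ∑ i ∈ s, w i * ‖y - p (j i)‖ ^ 2 ≤ ∑ i ∈ s, w i * ‖x - q (j i)‖ ^ 2 :=
    sum_mul_norm_sub_sq_le_of_norm_sub_le s hw₀ hw₁ (fun i _ i' _ ↦ hpq (j i) (j i')) hbary x
  have hactive : ∑ i ∈ s, w i * ‖y - p (j i)‖ ^ 2 = M + ∑ i ∈ s, w i * ‖x - q (j i)‖ ^ 2 := by
    rw [← one_mul M, ← hw₁, sum_mul, ← sum_add_distrib]
    refine sum_congr rfl fun i hi ↦ ?_
    have hi_active : ‖y - p (j i)‖ ^ 2 - ‖x - q (j i)‖ ^ 2 = M := hj_active i hi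
    linear_combination w i * hi_active
  linarith

theorem stmt_6_general (n d m : ℕ)
    (p : Fin n → EuclideanSpace ℝ (Fin d)) (q : Fin n → EuclideanSpace ℝ (Fin m))
    (hpq : ∀ i j, ‖p i - p j‖ ≤ ‖q i - q j‖) :
    ∀ x : EuclideanSpace ℝ (Fin m), ∃ y : EuclideanSpace ℝ (Fin d),
      ∀ i, ‖y - p i‖ ≤ ‖x - q i‖ :=
  exists_forall_norm_sub_le_of_norm_sub_le p q hpq

theorem stmt_6 (n d m : ℕ) (hn : 1 ≤ n) (hd : 1 ≤ d) (hm : 1 ≤ m)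
    (p : Fin n → EuclideanSpace ℝ (Fin d)) (q : Fin n → EuclideanSpace ℝ (Fin m))
    (hpq : ∀ i j, ‖p i - p j‖ ≤ ‖q i - q j‖) :
    ∀ x : EuclideanSpace ℝ (Fin m), ∃ y : EuclideanSpace ℝ (Fin d),
      ∀ i, ‖y - p i‖ ≤ ‖x - q i‖ :=
  stmt_6_general n d m p q hpq
end

section
/- (Projected KDE never exceeds the original KDE; deterministic core of the right side of Lemma 3.2.) Let n ≥ 1, d, m ≥ 1, let p₁,…,pₙ ∈ ℝ^d and q₁,…,qₙ ∈ ℝ^m satisfy ‖pᵢ − pⱼ‖ ≤ ‖qᵢ − qⱼ‖ for all i, j ∈ {1,…,n}. Then for every x ∈ ℝ^m there exists y ∈ ℝ^d such that Σ_{i=1}^n exp(−‖x−qᵢ‖²) ≤ Σ_{i=1}^n exp(−‖y−pᵢ‖²). -/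
open scoped RealInnerProductSpace
open Filter Topology

/-!
It suffices to find `y` with `‖y - pᵢ‖ ≤ ‖x - qᵢ‖` for every `i`, i.e. to extend the
1-Lipschitz map `qᵢ ↦ pᵢ` to the point `x` (one-point Kirszbraun). Take `y` minimising
`c(y) = maxᵢ (‖y - pᵢ‖² - ‖x - qᵢ‖²)`. At a minimiser, `y` lies in the convex hull of the
active points `pᵢ` (those attaining the maximum), since otherwise moving `y` towards that hull
decreases every active term. Writing `y = ∑ wₖ pₖ` over active points, the weighted variance
identity `∑ wₖ ‖pₖ - y‖² = ½ ∑ₖ ∑ₗ wₖ wₗ ‖pₖ - pₗ‖²` and the corresponding inequality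
`½ ∑ₖ ∑ₗ wₖ wₗ ‖qₖ - qₗ‖² ≤ ∑ wₖ ‖qₖ - x‖²` give `c(y) ≤ 0`.
-/

section Variance

variable {E : Type*} [NormedAddCommGroup E] [InnerProductSpace ℝ E]
  {κ : Type*} [Fintype κ] {w : κ → ℝ}

theorem sum_mul_norm_sub_sq_eq (hw : ∑ k, w k = 1) (a : κ → E) (v : E) :
    ∑ k, w k * ‖a k - v‖ ^ 2
      = ∑ k, w k * ‖a k - ∑ l, w l • a l‖ ^ 2 + ‖∑ l, w l • a l - v‖ ^ 2 := by
  set b := ∑ l, w l • a l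
  have hcross : ∑ k, w k * ⟪a k - b, b - v⟫ = 0 := by
    simp only [← real_inner_smul_left, ← sum_inner, smul_sub, Finset.sum_sub_distrib,
      ← Finset.sum_smul, hw, one_smul, b, sub_self, inner_zero_left]
  calc ∑ k, w k * ‖a k - v‖ ^ 2
      = ∑ k, (w k * ‖a k - b‖ ^ 2 + 2 * (w k * ⟪a k - b, b - v⟫) + w k * ‖b - v‖ ^ 2) := by
        refine Finset.sum_congr rfl fun k _ => ?_
        rw [← sub_add_sub_cancel (a k) b v, norm_add_sq_real]
        ring
    _ = ∑ k, w k * ‖a k - b‖ ^ 2 + ‖b - v‖ ^ 2 := by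
        rw [Finset.sum_add_distrib, Finset.sum_add_distrib, ← Finset.mul_sum, ← Finset.sum_mul,
          hcross, hw]
        ring

theorem sum_sum_mul_norm_sub_sq_eq (hw : ∑ k, w k = 1) (a : κ → E) :
    ∑ k, ∑ l, w k * w l * ‖a k - a l‖ ^ 2 = 2 * ∑ k, w k * ‖a k - ∑ l, w l • a l‖ ^ 2 := by
  set b := ∑ l, w l • a l
  calc ∑ k, ∑ l, w k * w l * ‖a k - a l‖ ^ 2
      = ∑ k, w k * ∑ l, w l * ‖a l - a k‖ ^ 2 := by
        simp only [Finset.mul_sum, mul_assoc]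
        exact Finset.sum_congr rfl fun k _ => Finset.sum_congr rfl fun l _ => by
          rw [norm_sub_rev]
    _ = ∑ k, w k * (∑ l, w l * ‖a l - b‖ ^ 2 + ‖a k - b‖ ^ 2) := by
        refine Finset.sum_congr rfl fun k _ => ?_
        rw [sum_mul_norm_sub_sq_eq hw a, norm_sub_rev b]
    _ = 2 * ∑ k, w k * ‖a k - b‖ ^ 2 := by
        simp only [mul_add, Finset.sum_add_distrib, ← Finset.sum_mul, hw]
        ring

theorem sum_mul_norm_sub_sum_smul_sq_le {F : Type*} [NormedAddCommGroup F]
    [InnerProductSpace ℝ F] (hw₀ : ∀ k, 0 ≤ w k) (hw : ∑ k, w k = 1) {a : κ → E} {b : κ → F}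
    (hab : ∀ k l, ‖a k - a l‖ ≤ ‖b k - b l‖) (v : F) :
    ∑ k, w k * ‖a k - ∑ l, w l • a l‖ ^ 2 ≤ ∑ k, w k * ‖b k - v‖ ^ 2 := by
  have hpairs : ∑ k, ∑ l, w k * w l * ‖a k - a l‖ ^ 2
      ≤ ∑ k, ∑ l, w k * w l * ‖b k - b l‖ ^ 2 := by
    gcongr with k _ l _
    · exact mul_nonneg (hw₀ k) (hw₀ l)
    · exact hab k l
  rw [sum_sum_mul_norm_sub_sq_eq hw, sum_sum_mul_norm_sub_sq_eq hw] at hpairs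
  rw [sum_mul_norm_sub_sq_eq hw b v]
  nlinarith [sq_nonneg ‖∑ l, w l • b l - v‖]

end Variance

theorem exists_minimizer_max_norm_sub_sq_sub {E ι : Type*} [SeminormedAddCommGroup E]
    [ProperSpace E] [Fintype ι] [Nonempty ι] (p : ι → E) (b : ι → ℝ) :
    ∃ (y : E) (c : ℝ), (∀ i, ‖y - p i‖ ^ 2 - b i ≤ c) ∧ ∀ z, ∃ i, c ≤ ‖z - p i‖ ^ 2 - b i := by
  let g : E → ℝ := fun z => Finset.univ.sup' Finset.univ_nonempty fun i => ‖z - p i‖ ^ 2 - b i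
  have hg : Continuous g := Continuous.finset_sup'_apply _ fun i _ => by fun_prop
  obtain ⟨i₀⟩ := ‹Nonempty ι›
  have hcoercive : Tendsto g (cocompact E) atTop := by
    refine tendsto_atTop_mono (fun z => Finset.le_sup' _ (Finset.mem_univ i₀)) ?_
    refine (tendsto_atTop_add_const_right _ (-b i₀) ((tendsto_pow_atTop two_ne_zero).comp
      (tendsto_dist_right_cocompact_atTop (p i₀)))).congr fun z => ?_
    rw [Function.comp_apply, dist_eq_norm, ← sub_eq_add_neg]
  obtain ⟨y, hy⟩ := hg.exists_forall_le hcoercive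
  refine ⟨y, g y, fun i => Finset.le_sup' (fun i => ‖y - p i‖ ^ 2 - b i) (Finset.mem_univ i),
    fun z => ?_⟩
  obtain ⟨i, -, hi⟩ := Finset.exists_mem_eq_sup' Finset.univ_nonempty
    fun i => ‖z - p i‖ ^ 2 - b i
  exact ⟨i, hi ▸ hy z⟩

section Descent

variable {E : Type*} [NormedAddCommGroup E] [InnerProductSpace ℝ E]

theorem exists_inner_neg_of_notMem {K : Set E} (hK : IsComplete K) (hKc : Convex ℝ K) {y : E}
    (hy : y ∉ K) : ∃ u : E, ∀ z ∈ K, ⟪y - z, u⟫ < 0 := by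
  rcases K.eq_empty_or_nonempty with rfl | hne
  · exact ⟨0, fun z hz => hz.elim⟩
  obtain ⟨z₀, hz₀, hmin⟩ := exists_norm_eq_iInf_of_complete_convex hne hK hKc y
  have hproj := (norm_eq_iInf_iff_real_inner_le_zero hKc hz₀).1 hmin
  have hpos : 0 < ‖y - z₀‖ ^ 2 := by
    have : y - z₀ ≠ 0 := sub_ne_zero.2 fun h => hy (h ▸ hz₀)
    positivity
  refine ⟨z₀ - y, fun z hz => ?_⟩
  have hdecomp : ⟪y - z, z₀ - y⟫ = ⟪y - z₀, z - z₀⟫ - ‖y - z₀‖ ^ 2 := by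
    rw [show y - z = (y - z₀) - (z - z₀) by abel, show z₀ - y = -(y - z₀) by abel,
      inner_neg_right, inner_sub_left, real_inner_comm (z - z₀), real_inner_self_eq_norm_sq]
    ring
  linarith [hproj z hz]

theorem eventually_norm_add_smul_sub_sq_lt {y u z : E} (h : ⟪y - z, u⟫ < 0) :
    ∀ᶠ t in 𝓝[>] (0 : ℝ), ‖y + t • u - z‖ ^ 2 < ‖y - z‖ ^ 2 := by
  have hslope : ∀ᶠ t in 𝓝 (0 : ℝ), 2 * ⟪y - z, u⟫ + t * ‖u‖ ^ 2 < 0 := by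
    have hc : Continuous fun t : ℝ => 2 * ⟪y - z, u⟫ + t * ‖u‖ ^ 2 := by fun_prop
    exact hc.continuousAt.eventually_lt continuousAt_const
      (by simp only [zero_mul, add_zero]; linarith)
  filter_upwards [nhdsWithin_le_nhds hslope, self_mem_nhdsWithin] with t ht (ht₀ : 0 < t)
  have hexpand : ‖y + t • u - z‖ ^ 2 = ‖y - z‖ ^ 2 + t * (2 * ⟪y - z, u⟫ + t * ‖u‖ ^ 2) := by
    rw [add_sub_right_comm, norm_add_sq_real, real_inner_smul_right, norm_smul,
      Real.norm_of_nonneg ht₀.le]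
    ring
  rw [hexpand]
  nlinarith

/-- `hy` and `hc` say that `c` is the minimum of `z ↦ maxᵢ (‖z - pᵢ‖² - bᵢ)`, attained at `y`. -/
theorem mem_convexHull_active_of_minimizer_max {ι : Type*} [Finite ι] (p : ι → E)
    (b : ι → ℝ) {y : E} {c : ℝ} (hy : ∀ i, ‖y - p i‖ ^ 2 - b i ≤ c)
    (hc : ∀ z, ∃ i, c ≤ ‖z - p i‖ ^ 2 - b i) :
    y ∈ convexHull ℝ (p '' {i | ‖y - p i‖ ^ 2 - b i = c}) := by
  by_contra hy_notMem
  have hfin : (p '' {i | ‖y - p i‖ ^ 2 - b i = c}).Finite := Set.toFinite _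
  obtain ⟨u, hu⟩ := exists_inner_neg_of_notMem (hfin.isCompact_convexHull (𝕜 := ℝ)).isComplete
    (convex_convexHull ℝ _) hy_notMem
  have hdescent : ∀ i, ∀ᶠ t in 𝓝[>] (0 : ℝ), ‖y + t • u - p i‖ ^ 2 - b i < c := by
    intro i
    rcases (hy i).eq_or_lt with hact | hinact
    · filter_upwards [eventually_norm_add_smul_sub_sq_lt
        (hu _ (subset_convexHull ℝ _ ⟨i, hact, rfl⟩))] with t ht
      linarith
    · have hcont : Continuous fun t : ℝ => ‖y + t • u - p i‖ ^ 2 - b i := by fun_prop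
      exact nhdsWithin_le_nhds <|
        hcont.continuousAt.eventually_lt continuousAt_const (by simpa using hinact)
  obtain ⟨t, ht⟩ := (eventually_all.2 hdescent).exists
  obtain ⟨i, hi⟩ := hc (y + t • u)
  exact (ht i).not_ge hi

end Descent

theorem kirszbraun_one_point {ι E F : Type*} [Fintype ι] [NormedAddCommGroup E]
    [InnerProductSpace ℝ E] [FiniteDimensional ℝ E] [NormedAddCommGroup F]
    [InnerProductSpace ℝ F] (p : ι → E) (q : ι → F) (hpq : ∀ i j, ‖p i - p j‖ ≤ ‖q i - q j‖)
    (x : F) : ∃ y : E, ∀ i, ‖y - p i‖ ≤ ‖x - q i‖ := by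
  rcases isEmpty_or_nonempty ι with _ | _
  · exact ⟨0, fun i => isEmptyElim i⟩
  obtain ⟨y, c, hy, hc⟩ := exists_minimizer_max_norm_sub_sq_sub p fun i => ‖x - q i‖ ^ 2
  obtain ⟨κ, _, w, z, hw₀, hw, hz, hyw⟩ :=
    mem_convexHull_iff_exists_fintype.1 (mem_convexHull_active_of_minimizer_max p _ hy hc)
  choose j hj_active hjz using hz
  obtain rfl : z = fun k => p (j k) := funext fun k => (hjz k).symm
  have hc_eq : c = ∑ k, w k * (‖p (j k) - y‖ ^ 2 - ‖q (j k) - x‖ ^ 2) := by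
    calc c = ∑ k, w k * c := by rw [← Finset.sum_mul, hw, one_mul]
      _ = _ := Finset.sum_congr rfl fun k _ => by
        rw [norm_sub_rev (p _), norm_sub_rev (q _), hj_active k]
  have hvar := sum_mul_norm_sub_sum_smul_sq_le hw₀ hw (a := fun k => p (j k))
    (fun k l => hpq (j k) (j l)) x
  rw [hyw] at hvar
  have hc_nonpos : c ≤ 0 := by
    rw [hc_eq]
    simp only [mul_sub, Finset.sum_sub_distrib]
    linarith
  exact ⟨y, fun i => (pow_le_pow_iff_left₀ (norm_nonneg _) (norm_nonneg _) two_ne_zero).1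
    (by linarith [hy i])⟩

theorem stmt_7_general (n d m : ℕ)
    (p : Fin n → EuclideanSpace ℝ (Fin d)) (q : Fin n → EuclideanSpace ℝ (Fin m))
    (hpq : ∀ i j, ‖p i - p j‖ ≤ ‖q i - q j‖) :
    ∀ x : EuclideanSpace ℝ (Fin m), ∃ y : EuclideanSpace ℝ (Fin d),
      ∑ i, Real.exp (-‖x - q i‖ ^ 2) ≤ ∑ i, Real.exp (-‖y - p i‖ ^ 2) := by
  intro x
  obtain ⟨y, hy⟩ := kirszbraun_one_point p q hpq x
  exact ⟨y, Finset.sum_le_sum fun i _ => Real.exp_le_exp.2 <| neg_le_neg <|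
    pow_le_pow_left₀ (norm_nonneg _) (hy i) 2⟩

theorem stmt_7 (n d m : ℕ) (hn : 1 ≤ n) (hd : 1 ≤ d) (hm : 1 ≤ m)
    (p : Fin n → EuclideanSpace ℝ (Fin d)) (q : Fin n → EuclideanSpace ℝ (Fin m))
    (hpq : ∀ i j, ‖p i - p j‖ ≤ ‖q i - q j‖) :
    ∀ x : EuclideanSpace ℝ (Fin m), ∃ y : EuclideanSpace ℝ (Fin d),
      ∑ i, Real.exp (-‖x - q i‖ ^ 2) ≤ ∑ i, Real.exp (-‖y - p i‖ ^ 2) :=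
  stmt_7_general n d m p q hpq
end

section
/- (Lemma 2.3, with the binary-search guarantee as a hypothesis.) Let d ≥ 1, n ≥ 1, let ε, ρ > 0 with ερ ≤ 1/2, let r, r' > 0 with r + r' ≥ 1, set L = log(1/(ερ)) and s = ⌈(r+r')² e² log(d/(ερ))⌉. Let p₁,…,pₙ ∈ ℝ^d, q ∈ ℝ^d, and let Q = {i : ‖pᵢ − q‖ ≤ r'·√L}. Let x̂, x* ∈ ℝ^d with ‖x̂ − q‖ ≤ r·√L and ‖x* − q‖ ≤ r·√L, and suppose Σ_{i∈Q} T_s(x̂,pᵢ) ≥ Σ_{i∈Q} T_s(x*,pᵢ) − n·ερ/10. Then Σ_{i∈Q} exp(−‖x̂−pᵢ‖²) ≥ Σ_{i∈Q} exp(−‖x*−pᵢ‖²) − n·ερ/2. -/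
/-!
Each coordinate factor of `T_s(x, p)` is the degree-`(s - 1)` Taylor polynomial of `exp (-t)` at
`t = (xₖ - pₖ)²`, and `exp (-‖x - p‖²)` is the product of the `exp (-t)`. For `i ∈ Q` both `x̂` and
`x*` are within `(r + r')√L` of `pᵢ`, so `e² t ≤ s` and the Taylor remainder is at most
`2 tˢ/s! ≤ 2 e⁻ˢ`. A product of `d` factors bounded by `1`, each perturbed by `δ`, moves by at most
`(1 + δ)ᵈ - 1 ≤ 2dδ`, and the choice of `s` makes `64 d e⁻ˢ ≤ ερ`. Hence every summand of
`Σ_{i∈Q} T_s` is within `ερ/16` of the Gaussian one, and `1/16 + 1/10 + 1/16 ≤ 1/2`.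
-/

open Finset Real

noncomputable def taylorExpNeg (s : ℕ) (t : ℝ) : ℝ :=
  ∑ j ∈ range s, (-t) ^ j / (Nat.factorial j : ℝ)

/-- The paper's `T_s(x, p)`. -/
noncomputable def truncTaylorProd {ι : Type*} [Fintype ι] (s : ℕ) (x p : EuclideanSpace ℝ ι) : ℝ :=
  ∏ k, taylorExpNeg s ((x k - p k) ^ 2)

lemma abs_taylorExpNeg_sub_exp_le_two_mul {s : ℕ} {t : ℝ} (ht : 0 ≤ t)
    (hts : t / (s + 1) ≤ 1 / 2) :
    |taylorExpNeg s t - exp (-t)| ≤ 2 * (t ^ s / s.factorial) := by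
  have hx : ‖((-t : ℝ) : ℂ)‖ / s.succ ≤ 1 / 2 := by
    rw [Complex.norm_real, Real.norm_eq_abs, abs_neg, abs_of_nonneg ht]; push_cast; exact hts
  have h := Complex.exp_bound' hx
  rw [abs_sub_comm, taylorExpNeg, mul_comm]
  have : ‖Complex.exp ((-t : ℝ) : ℂ) - ∑ m ∈ range s, ((-t : ℝ) : ℂ) ^ m / m.factorial‖
      = |exp (-t) - ∑ m ∈ range s, (-t) ^ m / m.factorial| := by
    rw [← Complex.ofReal_exp]; norm_cast
  rw [this, Complex.norm_real, Real.norm_eq_abs, abs_neg, abs_of_nonneg ht] at h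
  exact h

lemma pow_div_factorial_le_exp_neg {s : ℕ} {t : ℝ} (ht : 0 ≤ t) (hts : exp 1 ^ 2 * t ≤ s) :
    t ^ s / s.factorial ≤ exp (-s) := by
  have ht' : t ≤ s * exp (-2) := by
    rw [show exp (-2) = (exp 1 ^ 2)⁻¹ by rw [← exp_nat_mul, ← exp_neg]; norm_num]
    rw [← div_eq_mul_inv, le_div_iff₀ (by positivity)]; linarith
  calc t ^ s / s.factorial ≤ (s * exp (-2)) ^ s / s.factorial := by gcongr
    _ = exp (-2) ^ s * ((s : ℝ) ^ s / s.factorial) := by ring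
    _ ≤ exp (-2) ^ s * exp s := by gcongr; exact pow_div_factorial_le_exp _ (Nat.cast_nonneg s) s
    _ = exp (-s) := by rw [← exp_nat_mul, ← exp_add]; ring_nf

lemma abs_taylorExpNeg_sub_exp_le {s : ℕ} {t : ℝ} (ht : 0 ≤ t) (hts : exp 1 ^ 2 * t ≤ s) :
    |taylorExpNeg s t - exp (-t)| ≤ 2 * exp (-s) := by
  have he : 4 ≤ exp 1 ^ 2 := by nlinarith [exp_one_gt_d9]
  have hsmall : t / (s + 1) ≤ 1 / 2 := by
    rw [div_le_iff₀ (by positivity)]; nlinarith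
  calc _ ≤ 2 * (t ^ s / s.factorial) := abs_taylorExpNeg_sub_exp_le_two_mul ht hsmall
    _ ≤ 2 * exp (-s) := by gcongr; exact pow_div_factorial_le_exp_neg ht hts

lemma abs_prod_sub_prod_le {ι : Type*} [DecidableEq ι] (S : Finset ι) {f g : ι → ℝ} {δ : ℝ}
    (hδ : 0 ≤ δ) (hfg : ∀ i ∈ S, |f i - g i| ≤ δ) (hg : ∀ i ∈ S, |g i| ≤ 1) :
    |∏ i ∈ S, f i - ∏ i ∈ S, g i| ≤ (1 + δ) ^ #S - 1 := by
  induction S using Finset.induction_on with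
  | empty => simp
  | @insert a S ha ih =>
    simp only [mem_insert, forall_eq_or_imp] at hfg hg
    have hfa : |f a| ≤ 1 + δ := by
      calc |f a| = |g a + (f a - g a)| := by ring_nf
        _ ≤ 1 + δ := (abs_add_le _ _).trans (add_le_add hg.1 hfg.1)
    have hgS : |∏ i ∈ S, g i| ≤ 1 := by
      rw [abs_prod]; exact prod_le_one (fun i _ => abs_nonneg _) hg.2
    rw [prod_insert ha, prod_insert ha, card_insert_of_notMem ha]
    calc |f a * ∏ i ∈ S, f i - g a * ∏ i ∈ S, g i|
        = |f a * (∏ i ∈ S, f i - ∏ i ∈ S, g i) + (f a - g a) * ∏ i ∈ S, g i| := by ring_nf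
      _ ≤ |f a| * |∏ i ∈ S, f i - ∏ i ∈ S, g i| + |f a - g a| * |∏ i ∈ S, g i| := by
        rw [← abs_mul, ← abs_mul]; exact abs_add_le _ _
      _ ≤ (1 + δ) * ((1 + δ) ^ #S - 1) + δ * 1 :=
        add_le_add (mul_le_mul hfa (ih hfg.2 hg.2) (abs_nonneg _) (by linarith))
          (mul_le_mul hfg.1 hgS (abs_nonneg _) hδ)
      _ = (1 + δ) ^ (#S + 1) - 1 := by ring

lemma abs_sum_sub_sum_le_card_mul {ι : Type*} (S : Finset ι) {f g : ι → ℝ} {c : ℝ}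
    (h : ∀ i ∈ S, |f i - g i| ≤ c) : |∑ i ∈ S, f i - ∑ i ∈ S, g i| ≤ #S * c := by
  rw [← sum_sub_distrib]
  calc _ ≤ ∑ i ∈ S, |f i - g i| := abs_sum_le_sum_abs _ _
    _ ≤ #S • c := sum_le_card_nsmul _ _ _ h
    _ = #S * c := nsmul_eq_mul _ _

lemma one_add_pow_sub_one_le {δ : ℝ} {n : ℕ} (hδ : 0 ≤ δ) (hnδ : n * δ ≤ 1) :
    (1 + δ) ^ n - 1 ≤ 2 * (n * δ) := by
  have hnδ0 : 0 ≤ n * δ := mul_nonneg n.cast_nonneg hδ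
  have hexp : |exp (n * δ) - 1| ≤ 2 * |n * δ| :=
    abs_exp_sub_one_le (by rwa [abs_of_nonneg hnδ0])
  rw [abs_of_nonneg hnδ0] at hexp
  calc (1 + δ) ^ n - 1 ≤ exp δ ^ n - 1 := by
        gcongr; linarith [add_one_le_exp δ]
    _ = exp (n * δ) - 1 := by rw [exp_nat_mul]
    _ ≤ 2 * (n * δ) := (abs_le.mp hexp).2

lemma abs_truncTaylorProd_sub_exp_le {ι : Type*} [Fintype ι] {s : ℕ} {x p : EuclideanSpace ℝ ι}
    (hs : exp 1 ^ 2 * ‖x - p‖ ^ 2 ≤ s) (hι : 2 * Fintype.card ι * exp (-s) ≤ 1) :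
    |truncTaylorProd s x p - exp (-‖x - p‖ ^ 2)| ≤ 4 * Fintype.card ι * exp (-s) := by
  classical
  have hnorm : ‖x - p‖ ^ 2 = ∑ k, (x k - p k) ^ 2 := by
    simp [EuclideanSpace.real_norm_sq_eq]
  have hcoord : ∀ k ∈ univ, |taylorExpNeg s ((x k - p k) ^ 2) - exp (-(x k - p k) ^ 2)|
      ≤ 2 * exp (-s) := by
    intro k _
    refine abs_taylorExpNeg_sub_exp_le (sq_nonneg _) (le_trans ?_ hs)
    refine mul_le_mul_of_nonneg_left ?_ (by positivity)
    rw [hnorm]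
    exact single_le_sum (f := fun k => (x k - p k) ^ 2) (fun _ _ => sq_nonneg _) (mem_univ k)
  have hexp : exp (-‖x - p‖ ^ 2) = ∏ k, exp (-(x k - p k) ^ 2) := by
    rw [← exp_sum, hnorm, sum_neg_distrib]
  rw [hexp, truncTaylorProd]
  calc _ ≤ (1 + 2 * exp (-s)) ^ #(univ : Finset ι) - 1 :=
        abs_prod_sub_prod_le _ (by positivity) hcoord
          (fun k _ => by rw [abs_of_pos (exp_pos _)]; exact exp_le_one_iff.mpr (by simp [sq_nonneg]))
    _ ≤ 2 * (Fintype.card ι * (2 * exp (-s))) :=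
        one_add_pow_sub_one_le (by positivity) (by rw [card_univ]; linarith)
    _ = _ := by ring

lemma mul_exp_neg_le_one {u s : ℝ} (hu : 2 ≤ u) (hs : 7 * log u ≤ s) :
    64 * u * exp (-s) ≤ 1 := by
  have hu0 : 0 < u := by linarith
  have h7 : exp (-s) ≤ (u ^ 7)⁻¹ := by
    calc exp (-s) ≤ exp (-(7 * log u)) := exp_le_exp.mpr (by linarith)
      _ = (u ^ 7)⁻¹ := by
        rw [exp_neg, show (7 : ℝ) = (7 : ℕ) by norm_num, exp_nat_mul, exp_log hu0]
  have h64 : 64 ≤ u ^ 6 := by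
    calc (64 : ℝ) = 2 ^ 6 := by norm_num
      _ ≤ u ^ 6 := by gcongr
  calc 64 * u * exp (-s) ≤ 64 * u * (u ^ 7)⁻¹ := by gcongr
    _ = 64 / u ^ 6 := by field_simp
    _ ≤ 1 := by rw [div_le_one (by positivity)]; exact h64

lemma mul_exp_neg_le_of_le_mul_log {d : ℕ} {c R s : ℝ} (hd : 1 ≤ d) (hc : 0 < c)
    (hc2 : c ≤ 1 / 2) (hR : 1 ≤ R) (hs : R ^ 2 * exp 1 ^ 2 * log (d / c) ≤ s) :
    64 * d * exp (-s) ≤ c := by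
  have hu : 2 ≤ d / c := by
    rw [le_div_iff₀ hc]; nlinarith [show (1 : ℝ) ≤ d by exact_mod_cast hd]
  have he : 7 ≤ exp 1 ^ 2 := by nlinarith [exp_one_gt_d9]
  have h7 : 7 * log (d / c) ≤ s := by
    refine le_trans ?_ hs
    gcongr
    · exact (log_pos (by linarith)).le
    · exact he.trans (le_mul_of_one_le_left (by positivity) (one_le_pow₀ hR))
  calc 64 * d * exp (-s) = c * (64 * (d / c) * exp (-s)) := by field_simp
    _ ≤ c := mul_le_of_le_one_right hc.le (mul_exp_neg_le_one hu h7)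

lemma norm_sub_sq_le {E : Type*} [SeminormedAddCommGroup E] {x y q : E} {a b L : ℝ}
    (hL : 0 ≤ L) (hx : ‖x - q‖ ≤ a * √L) (hy : ‖y - q‖ ≤ b * √L) :
    ‖x - y‖ ^ 2 ≤ (a + b) ^ 2 * L := by
  have hxy : ‖x - y‖ ≤ (a + b) * √L := by
    calc ‖x - y‖ ≤ ‖x - q‖ + ‖y - q‖ := by
          simpa only [dist_eq_norm] using dist_triangle_right x y q
      _ ≤ (a + b) * √L := by linarith
  calc ‖x - y‖ ^ 2 ≤ ((a + b) * √L) ^ 2 := pow_le_pow_left₀ (norm_nonneg _) hxy 2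
    _ = (a + b) ^ 2 * L := by rw [mul_pow, sq_sqrt hL]

theorem stmt_12_general (d n : ℕ) (hd : 1 ≤ d)
    (ε ρ : ℝ) (hε : 0 < ε) (hρ : 0 < ρ) (hερ : ε * ρ ≤ 1 / 2)
    (r r' : ℝ) (hrr' : 1 ≤ r + r')
    (L : ℝ) (hL : L = Real.log (1 / (ε * ρ)))
    (s : ℕ) (hs : s = ⌈(r + r') ^ 2 * Real.exp 1 ^ 2 * Real.log (d / (ε * ρ))⌉₊)
    (p : Fin n → EuclideanSpace ℝ (Fin d)) (q : EuclideanSpace ℝ (Fin d))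
    (Q : Finset (Fin n)) (hQ : Q = Finset.univ.filter (fun i => ‖p i - q‖ ≤ r' * Real.sqrt L))
    (xhat xstar : EuclideanSpace ℝ (Fin d))
    (hxhat : ‖xhat - q‖ ≤ r * Real.sqrt L) (hxstar : ‖xstar - q‖ ≤ r * Real.sqrt L)
    (hT : ∑ i ∈ Q, ∏ k, ∑ j ∈ Finset.range s,
            (-(xhat k - p i k) ^ 2) ^ j / (Nat.factorial j : ℝ) ≥
          (∑ i ∈ Q, ∏ k, ∑ j ∈ Finset.range s,
            (-(xstar k - p i k) ^ 2) ^ j / (Nat.factorial j : ℝ)) - n * ε * ρ / 10) :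
    ∑ i ∈ Q, Real.exp (-‖xhat - p i‖ ^ 2) ≥
      (∑ i ∈ Q, Real.exp (-‖xstar - p i‖ ^ 2)) - n * ε * ρ / 2 := by
  have hερ0 : 0 < ε * ρ := mul_pos hε hρ
  have hL0 : 0 ≤ L := hL ▸ log_nonneg (by rw [le_div_iff₀ hερ0]; linarith)
  have hLlog : L ≤ log (d / (ε * ρ)) :=
    hL ▸ log_le_log (by positivity) (div_le_div_of_nonneg_right (by exact_mod_cast hd) hερ0.le)
  have hs_ge : (r + r') ^ 2 * exp 1 ^ 2 * log (d / (ε * ρ)) ≤ s := hs ▸ Nat.le_ceil _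
  have hds : 64 * d * exp (-s) ≤ ε * ρ := mul_exp_neg_le_of_le_mul_log hd hερ0 hερ hrr' hs_ge
  have hpoint : ∀ x : EuclideanSpace ℝ (Fin d), ‖x - q‖ ≤ r * √L → ∀ i ∈ Q,
      |truncTaylorProd s x (p i) - exp (-‖x - p i‖ ^ 2)| ≤ ε * ρ / 16 := by
    intro x hx i hi
    rw [hQ, mem_filter] at hi
    have hxp : exp 1 ^ 2 * ‖x - p i‖ ^ 2 ≤ s := by
      calc exp 1 ^ 2 * ‖x - p i‖ ^ 2 ≤ exp 1 ^ 2 * ((r + r') ^ 2 * log (d / (ε * ρ))) := by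
            gcongr; exact (norm_sub_sq_le hL0 hx hi.2).trans (by gcongr)
        _ ≤ (s : ℝ) := by linarith
    have := abs_truncTaylorProd_sub_exp_le hxp
      (by rw [Fintype.card_fin]; nlinarith [exp_pos (-s : ℝ)])
    rw [Fintype.card_fin] at this
    linarith
  have hsum : ∀ x, ‖x - q‖ ≤ r * √L → |∑ i ∈ Q, truncTaylorProd s x (p i) -
      ∑ i ∈ Q, exp (-‖x - p i‖ ^ 2)| ≤ n * ε * ρ / 16 := by
    intro x hx
    refine (abs_sum_sub_sum_le_card_mul Q (hpoint x hx)).trans ?_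
    have : (#Q : ℝ) ≤ n := by exact_mod_cast (card_le_univ Q).trans_eq (Fintype.card_fin n)
    nlinarith
  have hT' : ∑ i ∈ Q, truncTaylorProd s xhat (p i) ≥
      ∑ i ∈ Q, truncTaylorProd s xstar (p i) - n * ε * ρ / 10 := hT
  linarith [abs_le.mp (hsum xhat hxhat), abs_le.mp (hsum xstar hxstar)]

theorem stmt_12 (d n : ℕ) (hd : 1 ≤ d) (hn : 1 ≤ n)
    (ε ρ : ℝ) (hε : 0 < ε) (hρ : 0 < ρ) (hερ : ε * ρ ≤ 1 / 2)
    (r r' : ℝ) (hr : 0 < r) (hr' : 0 < r') (hrr' : 1 ≤ r + r')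
    (L : ℝ) (hL : L = Real.log (1 / (ε * ρ)))
    (s : ℕ) (hs : s = ⌈(r + r') ^ 2 * Real.exp 1 ^ 2 * Real.log (d / (ε * ρ))⌉₊)
    (p : Fin n → EuclideanSpace ℝ (Fin d)) (q : EuclideanSpace ℝ (Fin d))
    (Q : Finset (Fin n)) (hQ : Q = Finset.univ.filter (fun i => ‖p i - q‖ ≤ r' * Real.sqrt L))
    (xhat xstar : EuclideanSpace ℝ (Fin d))
    (hxhat : ‖xhat - q‖ ≤ r * Real.sqrt L) (hxstar : ‖xstar - q‖ ≤ r * Real.sqrt L)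
    (hT : ∑ i ∈ Q, ∏ k, ∑ j ∈ Finset.range s,
            (-(xhat k - p i k) ^ 2) ^ j / (Nat.factorial j : ℝ) ≥
          (∑ i ∈ Q, ∏ k, ∑ j ∈ Finset.range s,
            (-(xstar k - p i k) ^ 2) ^ j / (Nat.factorial j : ℝ)) - n * ε * ρ / 10) :
    ∑ i ∈ Q, Real.exp (-‖xhat - p i‖ ^ 2) ≥
      (∑ i ∈ Q, Real.exp (-‖xstar - p i‖ ^ 2)) - n * ε * ρ / 2 :=
  stmt_12_general d n hd ε ρ hε hρ hερ r r' hrr' L hL s hs p q Q hQ xhat xstar hxhat hxstar hT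
end

section
/- (Deterministic form of Lemma 3.2: a low-distortion embedding preserves the maximum KDE value.) Let n ≥ 1, d, m ≥ 1, 0 < ε ≤ 1, 0 < ρ ≤ 1, and set γ = ε/(4·log(4/(ερ))). Let p₁,…,pₙ ∈ ℝ^d and let x* ∈ ℝ^d satisfy G_P(x*) ≥ nρ and G_P(y) ≤ G_P(x*) for all y ∈ ℝ^d. Let x' ∈ ℝ^m and q₁,…,qₙ ∈ ℝ^m be such that for every pair u, v among {x*, p₁, …, pₙ}, with corresponding images u', v' among {x', q₁, …, qₙ}, one has ‖u − v‖² ≤ ‖u' − v'‖² ≤ (1+γ)·‖u − v‖². Then: (i) G_Q(x') ≥ (1 − ε/2)·G_P(x*), and (ii) G_Q(y) ≤ G_P(x*) for every y ∈ ℝ^m. -/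
open scoped BigOperators

/-! (i) Each kernel value shrinks by at most a factor `e^{-γ t} ≥ 1 - γ t`, which is
`≥ 1 - ε/4` while `t ≤ L := log (4/(ερ))`; the terms with `t > L` are below `e^{-L} = ερ/4` and
together cost at most `nερ/4 ≤ εG_P(x*)/4`.
(ii) Given `y`, weight the `p i` by `w i = exp (-‖y - q i‖²)` and let `x` be their weighted
centroid. Its weighted mean square distance to the `p i` is a weighted sum of the pairwise
distances `‖p i - p j‖²`, hence at most the corresponding one for the `q i`, which is at most the
weighted mean square distance of `y` to the `q i`. Since `exp u ≥ 1 + u`, this forces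
`G_P(x) ≥ G_Q(y)`, and `G_P(x) ≤ G_P(x*)`. -/

open Finset Real

noncomputable def gaussianKDE {ι E : Type*} [Fintype ι] [NormedAddCommGroup E] (p : ι → E)
    (x : E) : ℝ :=
  ∑ i, exp (-‖x - p i‖ ^ 2)

theorem sum_exp_neg_le_of_sum_mul_le {ι : Type*} (s : Finset ι) (a b : ι → ℝ)
    (h : ∑ i ∈ s, exp (-a i) * b i ≤ ∑ i ∈ s, exp (-a i) * a i) :
    ∑ i ∈ s, exp (-a i) ≤ ∑ i ∈ s, exp (-b i) := by
  have hterm : ∀ i ∈ s, exp (-a i) * (1 + (a i - b i)) ≤ exp (-b i) := fun i _ => by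
    calc exp (-a i) * (1 + (a i - b i)) ≤ exp (-a i) * exp (a i - b i) := by
          gcongr; linarith [add_one_le_exp (a i - b i)]
      _ = exp (-b i) := by rw [← exp_add]; ring_nf
  calc ∑ i ∈ s, exp (-a i)
      ≤ ∑ i ∈ s, exp (-a i) * (1 + (a i - b i)) := by
        simp only [mul_add, mul_sub, mul_one, sum_add_distrib, sum_sub_distrib]
        linarith
    _ ≤ ∑ i ∈ s, exp (-b i) := sum_le_sum hterm

theorem one_sub_mul_exp_neg_sub_exp_neg_le {γ L : ℝ} (hγ : 0 ≤ γ) (hL : 0 ≤ L) (t : ℝ) :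
    (1 - γ * L) * exp (-t) - exp (-L) ≤ exp (-((1 + γ) * t)) := by
  rcases le_or_gt t L with htL | hLt
  · have hlin : 1 - γ * L ≤ exp (-(γ * t)) := by
      linarith [add_one_le_exp (-(γ * t)), mul_le_mul_of_nonneg_left htL hγ]
    calc (1 - γ * L) * exp (-t) - exp (-L) ≤ exp (-(γ * t)) * exp (-t) := by
          nlinarith [exp_pos (-t), exp_pos (-L)]
      _ = exp (-((1 + γ) * t)) := by rw [← exp_add]; ring_nf
  · have : exp (-t) ≤ exp (-L) := exp_le_exp.mpr (by linarith)
    nlinarith [exp_pos (-t), exp_pos (-((1 + γ) * t)), mul_nonneg hγ hL]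

theorem one_sub_mul_gaussianKDE_sub_le {ι E F : Type*} [Fintype ι] [NormedAddCommGroup E]
    [NormedAddCommGroup F] {γ L : ℝ} (hγ : 0 ≤ γ) (hL : 0 ≤ L) {p : ι → E} {q : ι → F}
    {x : E} {x' : F} (h : ∀ i, ‖x' - q i‖ ^ 2 ≤ (1 + γ) * ‖x - p i‖ ^ 2) :
    (1 - γ * L) * gaussianKDE p x - Fintype.card ι * exp (-L) ≤ gaussianKDE q x' := by
  calc (1 - γ * L) * gaussianKDE p x - Fintype.card ι * exp (-L)
      = ∑ i, ((1 - γ * L) * exp (-‖x - p i‖ ^ 2) - exp (-L)) := by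
        simp [gaussianKDE, sum_sub_distrib, mul_sum]
    _ ≤ ∑ i, exp (-((1 + γ) * ‖x - p i‖ ^ 2)) :=
        sum_le_sum fun i _ => one_sub_mul_exp_neg_sub_exp_neg_le hγ hL _
    _ ≤ gaussianKDE q x' := sum_le_sum fun i _ => exp_le_exp.mpr (neg_le_neg (h i))

section InnerProductSpace

variable {ι E F : Type*} [Fintype ι] [NormedAddCommGroup E] [InnerProductSpace ℝ E]
  [NormedAddCommGroup F] [InnerProductSpace ℝ F]

theorem sum_mul_sum_mul_norm_sub_sq (w : ι → ℝ) (v : ι → E) (z : E) :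
    (∑ i, w i) * ∑ i, w i * ‖z - v i‖ ^ 2 =
      ‖(∑ i, w i) • z - ∑ i, w i • v i‖ ^ 2 +
        (∑ i, ∑ j, w i * w j * ‖v i - v j‖ ^ 2) / 2 := by
  set W := ∑ i, w i
  set A := ∑ i, w i • v i
  have hA : ‖A‖ ^ 2 = ∑ i, ∑ j, w i * w j * inner ℝ (v i) (v j) := by
    rw [← real_inner_self_eq_norm_sq, sum_inner]
    simp only [A, inner_sum, inner_smul_left, inner_smul_right, RCLike.conj_to_real]
    exact sum_congr rfl fun i _ => sum_congr rfl fun j _ => by ring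
  have hzA : inner ℝ z A = ∑ i, w i * inner ℝ z (v i) := by
    simp only [A, inner_sum, inner_smul_right]
  have hpair : ∑ i, ∑ j, w i * w j * ‖v i - v j‖ ^ 2 =
      2 * (W * ∑ i, w i * ‖v i‖ ^ 2 - ‖A‖ ^ 2) := by
    calc ∑ i, ∑ j, w i * w j * ‖v i - v j‖ ^ 2
        = ∑ i, ∑ j, (w i * ‖v i‖ ^ 2 * w j - 2 * (w i * w j * inner ℝ (v i) (v j))
            + w i * (w j * ‖v j‖ ^ 2)) :=
          sum_congr rfl fun i _ => sum_congr rfl fun j _ => by rw [norm_sub_sq_real]; ring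
      _ = 2 * (W * ∑ i, w i * ‖v i‖ ^ 2 - ‖A‖ ^ 2) := by
          simp only [sum_add_distrib, sum_sub_distrib, ← mul_sum, ← sum_mul, hA]
          ring
  have hcentre : ‖W • z - A‖ ^ 2 = W ^ 2 * ‖z‖ ^ 2 - 2 * W * inner ℝ z A + ‖A‖ ^ 2 := by
    rw [norm_sub_sq_real, norm_smul, inner_smul_left, Real.norm_eq_abs, mul_pow, sq_abs]
    simp only [RCLike.conj_to_real]; ring
  have hlhs : ∑ i, w i * ‖z - v i‖ ^ 2 =
      W * ‖z‖ ^ 2 - 2 * inner ℝ z A + ∑ i, w i * ‖v i‖ ^ 2 := by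
    calc ∑ i, w i * ‖z - v i‖ ^ 2
        = ∑ i, (w i * ‖z‖ ^ 2 - 2 * (w i * inner ℝ z (v i)) + w i * ‖v i‖ ^ 2) :=
          sum_congr rfl fun i _ => by rw [norm_sub_sq_real]; ring
      _ = W * ‖z‖ ^ 2 - 2 * inner ℝ z A + ∑ i, w i * ‖v i‖ ^ 2 := by
          rw [sum_add_distrib, sum_sub_distrib, ← sum_mul, ← mul_sum, hzA]
  rw [hpair, hcentre, hlhs]
  ring

theorem exists_sum_mul_norm_sub_sq_le {w : ι → ℝ} (hw : ∀ i, 0 ≤ w i) {p : ι → E} {q : ι → F}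
    (hpq : ∀ i j, ‖p i - p j‖ ≤ ‖q i - q j‖) (y : F) :
    ∃ x, ∑ i, w i * ‖x - p i‖ ^ 2 ≤ ∑ i, w i * ‖y - q i‖ ^ 2 := by
  set W := ∑ i, w i
  rcases (sum_nonneg fun i _ => hw i : 0 ≤ W).eq_or_lt with hW | hW
  · have hw0 : ∀ i, w i = 0 := fun i =>
      (sum_eq_zero_iff_of_nonneg fun i _ => hw i).mp hW.symm i (mem_univ i)
    exact ⟨0, by simp [hw0]⟩
  refine ⟨W⁻¹ • ∑ i, w i • p i, le_of_mul_le_mul_left ?_ hW⟩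
  have hpair : ∑ i, ∑ j, w i * w j * ‖p i - p j‖ ^ 2 ≤ ∑ i, ∑ j, w i * w j * ‖q i - q j‖ ^ 2 :=
    sum_le_sum fun i _ => sum_le_sum fun j _ =>
      mul_le_mul_of_nonneg_left (pow_le_pow_left₀ (norm_nonneg _) (hpq i j) 2)
        (mul_nonneg (hw i) (hw j))
  rw [sum_mul_sum_mul_norm_sub_sq, sum_mul_sum_mul_norm_sub_sq, smul_inv_smul₀ hW.ne', sub_self,
    norm_zero]
  linarith [sq_nonneg ‖W • y - ∑ i, w i • q i‖]

theorem exists_gaussianKDE_le {p : ι → E} {q : ι → F} (hpq : ∀ i j, ‖p i - p j‖ ≤ ‖q i - q j‖)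
    (y : F) : ∃ x, gaussianKDE q y ≤ gaussianKDE p x := by
  obtain ⟨x, hx⟩ := exists_sum_mul_norm_sub_sq_le (fun i => (exp_pos (-‖y - q i‖ ^ 2)).le) hpq y
  exact ⟨x, sum_exp_neg_le_of_sum_mul_le univ (fun i => ‖y - q i‖ ^ 2) (fun i => ‖x - p i‖ ^ 2) hx⟩

end InnerProductSpace

theorem stmt_17_general (n d m : ℕ)
    (ε ρ : ℝ) (hε0 : 0 < ε) (hε1 : ε ≤ 1) (hρ0 : 0 < ρ) (hρ1 : ρ ≤ 1)
    (γ : ℝ) (hγ : γ = ε / (4 * Real.log (4 / (ε * ρ))))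
    (p : Fin n → EuclideanSpace ℝ (Fin d)) (xstar : EuclideanSpace ℝ (Fin d))
    (hρbound : (n : ℝ) * ρ ≤ ∑ i, Real.exp (-‖xstar - p i‖ ^ 2))
    (hmax : ∀ y : EuclideanSpace ℝ (Fin d),
      ∑ i, Real.exp (-‖y - p i‖ ^ 2) ≤ ∑ i, Real.exp (-‖xstar - p i‖ ^ 2))
    (q : Fin n → EuclideanSpace ℝ (Fin m)) (x' : EuclideanSpace ℝ (Fin m))
    (hdist : ∀ o₁ o₂ : Option (Fin n),
      ‖o₁.elim xstar p - o₂.elim xstar p‖ ^ 2 ≤ ‖o₁.elim x' q - o₂.elim x' q‖ ^ 2 ∧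
      ‖o₁.elim x' q - o₂.elim x' q‖ ^ 2 ≤ (1 + γ) * ‖o₁.elim xstar p - o₂.elim xstar p‖ ^ 2) :
    (∑ i, Real.exp (-‖x' - q i‖ ^ 2) ≥ (1 - ε / 2) * ∑ i, Real.exp (-‖xstar - p i‖ ^ 2)) ∧
      ∀ y : EuclideanSpace ℝ (Fin m),
        ∑ i, Real.exp (-‖y - q i‖ ^ 2) ≤ ∑ i, Real.exp (-‖xstar - p i‖ ^ 2) := by
  set L := log (4 / (ε * ρ))
  have hερ : 0 < ε * ρ := mul_pos hε0 hρ0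
  have hL : 0 < L := log_pos <| (one_lt_div hερ).mpr (by nlinarith)
  have hγL : γ * L = ε / 4 := by rw [hγ]; field_simp
  have hγ0 : 0 ≤ γ := by rw [hγ]; positivity
  have hexpL : exp (-L) = ε * ρ / 4 := by
    rw [← log_inv, exp_log (by positivity), inv_div]
  refine ⟨?_, fun y => ?_⟩
  · have h := one_sub_mul_gaussianKDE_sub_le hγ0 hL.le (p := p) (x := xstar)
      (q := q) (x' := x') fun i => (hdist none (some i)).2
    simp only [gaussianKDE, Fintype.card_fin, hγL, hexpL] at h
    linarith [mul_le_mul_of_nonneg_left hρbound hε0.le]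
  · obtain ⟨x, hx⟩ := exists_gaussianKDE_le (fun i j =>
      (pow_le_pow_iff_left₀ (norm_nonneg _) (norm_nonneg _) two_ne_zero).mp
        (hdist (some i) (some j)).1) y
    exact hx.trans (hmax x)

theorem stmt_17 (n d m : ℕ) (hn : 1 ≤ n) (hd : 1 ≤ d) (hm : 1 ≤ m)
    (ε ρ : ℝ) (hε0 : 0 < ε) (hε1 : ε ≤ 1) (hρ0 : 0 < ρ) (hρ1 : ρ ≤ 1)
    (γ : ℝ) (hγ : γ = ε / (4 * Real.log (4 / (ε * ρ))))
    (p : Fin n → EuclideanSpace ℝ (Fin d)) (xstar : EuclideanSpace ℝ (Fin d))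
    (hρbound : (n : ℝ) * ρ ≤ ∑ i, Real.exp (-‖xstar - p i‖ ^ 2))
    (hmax : ∀ y : EuclideanSpace ℝ (Fin d),
      ∑ i, Real.exp (-‖y - p i‖ ^ 2) ≤ ∑ i, Real.exp (-‖xstar - p i‖ ^ 2))
    (q : Fin n → EuclideanSpace ℝ (Fin m)) (x' : EuclideanSpace ℝ (Fin m))
    (hdist : ∀ o₁ o₂ : Option (Fin n),
      ‖o₁.elim xstar p - o₂.elim xstar p‖ ^ 2 ≤ ‖o₁.elim x' q - o₂.elim x' q‖ ^ 2 ∧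
      ‖o₁.elim x' q - o₂.elim x' q‖ ^ 2 ≤ (1 + γ) * ‖o₁.elim xstar p - o₂.elim xstar p‖ ^ 2) :
    (∑ i, Real.exp (-‖x' - q i‖ ^ 2) ≥ (1 - ε / 2) * ∑ i, Real.exp (-‖xstar - p i‖ ^ 2)) ∧
      ∀ y : EuclideanSpace ℝ (Fin m),
        ∑ i, Real.exp (-‖y - q i‖ ^ 2) ≤ ∑ i, Real.exp (-‖xstar - p i‖ ^ 2) :=
  stmt_17_general n d m ε ρ hε0 hε1 hρ0 hρ1 γ hγ p xstar hρbound hmax q x' hdist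
end
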